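/- Let h ≥ 1 and let σ_1, …, σ_{4h−1} be elements of a group G satisfying the braid relations. Set Γ = σ_1σ_2⋯σ_{2h−1} · σ_{4h−1}σ_{4h−2}⋯σ_{2h+1}. Then (σ_1σ_2⋯σ_{4h−1})^{4h} = [ (Γσ_{2h}Γ^{−1})·(Γ^2σ_{2h}Γ^{−2})⋯(Γ^{2h}σ_{2h}Γ^{−2h}) · (σ_1σ_2⋯σ_{2h−1})^{2h} · (σ_{4h−1}σ_{4h−2}⋯σ_{2h+1})^{2h} ]^2, where the first factor is the product over i = 1, …, 2h (in this order) of the conjugates Γ^iσ_{2h}Γ^{−i}. -/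

import Mathlib

/-!
With `δ = σ₁ ⋯ σ_{4h-1}`, the power `δ^{4h}` is the full twist, which is central. The half twist
of `σ_{2h+1}, …, σ_{4h-1}` conjugates `δ` to `η = σ₁ ⋯ σ_{2h-1} · σ_{4h-1} ⋯ σ_{2h} = Γ σ_{2h}`,
so `δ^{4h} = η^{4h}`. On the other side the product of conjugates telescopes to
`(Γ σ_{2h})^{2h} Γ^{-2h}`, and as the two chains in `Γ` commute, `Γ^{2h}` cancels against
their `2h`-th powers, leaving `η^{2h}`.
-/

/-- The ascending product `σ_a σ_{a+1} ⋯ σ_b` (written left to right). -/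
def ascProd {G : Type*} [Group G] (σ : ℕ → G) (a b : ℕ) : G :=
  ((List.range' a (b + 1 - a)).map σ).prod

/-- The descending product `σ_a σ_{a-1} ⋯ σ_b` (written left to right). -/
def descProd {G : Type*} [Group G] (σ : ℕ → G) (a b : ℕ) : G :=
  (((List.range' b (a + 1 - b)).map σ).reverse).prod

namespace Braid

variable {G : Type*} [Group G] (σ : ℕ → G)

def upChain (a k : ℕ) : G := ((List.range' a k).map σ).prod

def downChain (a k : ℕ) : G := ((List.range' a k).map σ).reverse.prod

/-- The Garside half twist of the generators `σ a, …, σ (a + k - 1)`. -/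
def halfTwist : ℕ → ℕ → G
  | _, 0 => 1
  | a, k + 1 => downChain σ a (k + 1) * halfTwist (a + 1) k

def FarCommute (n : ℕ) : Prop :=
  ∀ i j, 1 ≤ i → i + 2 ≤ j → j + 1 ≤ n → Commute (σ i) (σ j)

def BraidAdjacent (n : ℕ) : Prop :=
  ∀ i, 1 ≤ i → i + 2 ≤ n → σ i * σ (i + 1) * σ i = σ (i + 1) * σ i * σ (i + 1)

variable {σ}

theorem ascProd_eq_upChain (a b : ℕ) : ascProd σ a b = upChain σ a (b + 1 - a) := rfl

theorem descProd_eq_downChain (a b : ℕ) : descProd σ a b = downChain σ b (a + 1 - b) := rfl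

theorem upChain_succ (a k : ℕ) : upChain σ a (k + 1) = σ a * upChain σ (a + 1) k := by
  simp [upChain, List.range'_succ]

theorem upChain_one (a : ℕ) : upChain σ a 1 = σ a := by
  simp [upChain]

theorem upChain_succ' (a k : ℕ) : upChain σ a (k + 1) = upChain σ a k * σ (a + k) := by
  simp [upChain, List.range'_concat]

theorem upChain_add (a j l : ℕ) : upChain σ a (j + l) = upChain σ a j * upChain σ (a + j) l := by
  simp [upChain, ← List.range'_append_1]

theorem downChain_succ (a k : ℕ) : downChain σ a (k + 1) = downChain σ (a + 1) k * σ a := by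
  simp [downChain, List.range'_succ]

theorem halfTwist_succ (a k : ℕ) :
    halfTwist σ a (k + 1) = downChain σ a (k + 1) * halfTwist σ (a + 1) k := rfl

section Commute

variable {x : G} {a k : ℕ}

theorem commute_upChain (hx : ∀ j, a ≤ j → j < a + k → Commute x (σ j)) :
    Commute x (upChain σ a k) :=
  Commute.list_prod_right _ _ <| by
    simpa using fun _ j h₁ h₂ hj => hj ▸ hx j h₁ h₂

theorem commute_downChain (hx : ∀ j, a ≤ j → j < a + k → Commute x (σ j)) :
    Commute x (downChain σ a k) :=
  Commute.list_prod_right _ _ <| by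
    simpa using fun _ j h₁ h₂ hj => hj ▸ hx j h₁ h₂

theorem commute_halfTwist (hx : ∀ j, a ≤ j → j < a + k → Commute x (σ j)) :
    Commute x (halfTwist σ a k) := by
  induction k generalizing a with
  | zero => exact Commute.one_right x
  | succ k ih =>
    exact (commute_downChain hx).mul_right (ih fun j h₁ h₂ => hx j (by omega) (by omega))

end Commute

section FarCommute

variable {n : ℕ} (hσ : FarCommute σ n)
include hσ

theorem FarCommute.commute_upChain {i a k : ℕ} (hi : 1 ≤ i) (ha : i + 2 ≤ a) (hn : a + k ≤ n) :
    Commute (σ i) (upChain σ a k) :=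
  Braid.commute_upChain fun j h₁ h₂ => hσ i j hi (by omega) (by omega)

theorem FarCommute.upChain_commute {a k j : ℕ} (ha : 1 ≤ a) (hj : a + k + 1 ≤ j)
    (hn : j + 1 ≤ n) : Commute (upChain σ a k) (σ j) :=
  (Braid.commute_upChain fun i h₁ h₂ => (hσ i j (by omega) (by omega) hn).symm).symm

theorem halfTwist_semiconjBy {a k : ℕ} (ha : 1 ≤ a) (hn : a + k + 1 ≤ n) :
    SemiconjBy (halfTwist σ (a + 1) k) (upChain σ a (k + 1)) (downChain σ a (k + 1)) := by
  induction k generalizing a with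
  | zero => simp [halfTwist, upChain, downChain]
  | succ k ih =>
    have hT : Commute (σ a) (halfTwist σ (a + 2) k) :=
      commute_halfTwist fun j h₁ h₂ => hσ a j ha (by omega) (by omega)
    have hC := (ih (a := a + 1) (by omega) (by omega)).eq
    rw [halfTwist_succ, upChain_succ a (k + 1), downChain_succ a (k + 1)]
    calc downChain σ (a + 1) (k + 1) * halfTwist σ (a + 2) k * (σ a * upChain σ (a + 1) (k + 1))
        = downChain σ (a + 1) (k + 1) * σ a *
            (halfTwist σ (a + 2) k * upChain σ (a + 1) (k + 1)) := by
          rw [← mul_assoc, mul_assoc _ _ (σ a), ← hT.eq]; group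
      _ = downChain σ (a + 1) (k + 1) * σ a *
            (downChain σ (a + 1) (k + 1) * halfTwist σ (a + 2) k) := by rw [hC]

theorem halfTwist_semiconjBy_upChain_one (m l : ℕ) (hn : m + l + 2 ≤ n) :
    SemiconjBy (halfTwist σ (m + 2) l) (upChain σ 1 (m + (l + 1)))
      (upChain σ 1 m * downChain σ (m + 1) (l + 1)) := by
  rw [upChain_add, add_comm 1 m]
  have hA : Commute (halfTwist σ (m + 2) l) (upChain σ 1 m) :=
    (commute_halfTwist fun _ _ _ => hσ.upChain_commute le_rfl (by omega) (by omega)).symm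
  exact SemiconjBy.mul_right hA (halfTwist_semiconjBy hσ (by omega) (by omega))

end FarCommute

theorem sq_mul_mul_of_braid {r s t : G} (hrs : Commute r s) (hst : t * s * t = s * t * s) :
    (r * t * s) ^ 2 = (r * t) ^ 2 * (s * t) :=
  calc (r * t * s) ^ 2 = r * t * (s * r) * t * s := by simp only [sq, mul_assoc]
    _ = r * t * r * (s * t * s) := by rw [← hrs.eq]; simp only [mul_assoc]
    _ = (r * t) ^ 2 * (s * t) := by rw [← hst]; simp only [sq, mul_assoc]

section FullTwist

variable {n : ℕ} (hσ : FarCommute σ n) (hb : BraidAdjacent σ n)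
include hσ hb

theorem upChain_semiconjBy {i k : ℕ} (hi : 1 ≤ i) (hik : i + 1 ≤ k) (hk : k + 1 ≤ n) :
    SemiconjBy (upChain σ 1 k) (σ i) (σ (i + 1)) := by
  obtain ⟨i, rfl⟩ : ∃ j, i = j + 1 := ⟨i - 1, by omega⟩
  obtain ⟨l, rfl⟩ : ∃ l, k = i + 2 + l := ⟨k - i - 2, by omega⟩
  have hsplit : upChain σ 1 (i + 2 + l) =
      upChain σ 1 i * (σ (i + 1) * σ (i + 2)) * upChain σ (i + 3) l := by
    rw [upChain_add, upChain_succ', upChain_succ', add_comm 1 i,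
      show 1 + (i + 1) = i + 2 by omega, show 1 + (i + 2) = i + 3 by omega]
    simp only [mul_assoc]
  have hbraid : SemiconjBy (σ (i + 1) * σ (i + 2)) (σ (i + 1)) (σ (i + 2)) := by
    rw [SemiconjBy, ← mul_assoc]
    exact hb (i + 1) (by omega) (by omega)
  rw [hsplit]
  have hleft : Commute (upChain σ 1 i) (σ (i + 2)) :=
    hσ.upChain_commute le_rfl (by omega) (by omega)
  have hright : Commute (upChain σ (i + 3) l) (σ (i + 1)) :=
    (hσ.commute_upChain (by omega) le_rfl (by omega)).symm
  exact (SemiconjBy.mul_left hleft hbraid).mul_left hright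

theorem upChain_pow_semiconjBy {i j k : ℕ} (hi : 1 ≤ i) (hij : i + j ≤ k) (hk : k + 1 ≤ n) :
    SemiconjBy (upChain σ 1 k ^ j) (σ i) (σ (i + j)) := by
  induction j generalizing i with
  | zero => rw [pow_zero]; exact SemiconjBy.one_left _
  | succ j ih =>
    rw [pow_succ, ← add_assoc, add_right_comm]
    exact (ih (by omega) (by omega)).mul_left (upChain_semiconjBy hσ hb hi (by omega) hk)

theorem upChain_sq_semiconjBy {k : ℕ} (hk : k + 2 ≤ n) :
    SemiconjBy (upChain σ 1 (k + 1) ^ 2) (σ (k + 1)) (σ 1) := by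
  induction k with
  | zero => rw [upChain_one]; exact (Commute.refl (σ 1)).pow_left 2
  | succ k ih =>
    have hchain : upChain σ 1 (k + 1) = upChain σ 1 k * σ (k + 1) := by
      rw [upChain_succ', add_comm 1 k]
    have hchain' : upChain σ 1 (k + 2) = upChain σ 1 k * σ (k + 1) * σ (k + 2) := by
      rw [upChain_succ', hchain, add_comm 1]
    have hrs : Commute (upChain σ 1 k) (σ (k + 2)) :=
      hσ.upChain_commute le_rfl (by omega) (by omega)
    have ih' := (ih (by omega)).eq
    rw [hchain] at ih'
    rw [hchain', SemiconjBy, sq_mul_mul_of_braid hrs (hb (k + 1) (by omega) (by omega))]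
    calc _ = (upChain σ 1 k * σ (k + 1)) ^ 2 * (σ (k + 1) * σ (k + 2) * σ (k + 1)) := by
          rw [hb (k + 1) (by omega) (by omega)]; group
      _ = _ := by rw [← mul_assoc, ← mul_assoc, ih']; group

/-- Conjugation by `σ₁ ⋯ σₖ` shifts the generators up by one and its square sends `σₖ` back to
`σ₁`, so the full twist commutes with `σ₁`, hence with every conjugate of `σ₁` by `σ₁ ⋯ σₖ`. -/
theorem upChain_pow_succ_commute {i k : ℕ} (hi : 1 ≤ i) (hik : i ≤ k) (hk : k + 1 ≤ n) :
    Commute (upChain σ 1 k ^ (k + 1)) (σ i) := by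
  obtain ⟨k, rfl⟩ : ∃ j, k = j + 1 := ⟨k - 1, by omega⟩
  set δ := upChain σ 1 (k + 1)
  have hσ₁ : Commute (δ ^ (k + 2)) (σ 1) := by
    rw [add_comm k 2, pow_add]
    have hshift : SemiconjBy (δ ^ k) (σ 1) (σ (k + 1)) := by
      simpa [add_comm] using upChain_pow_semiconjBy hσ hb le_rfl (j := k) (by omega) hk
    exact (upChain_sq_semiconjBy hσ hb hk).mul_left hshift
  have hshift : SemiconjBy (δ ^ (i - 1)) (σ 1) (σ i) := by
    simpa [show 1 + (i - 1) = i by omega] using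
      upChain_pow_semiconjBy hσ hb le_rfl (j := i - 1) (by omega) hk
  have hconj : σ i = δ ^ (i - 1) * σ 1 * (δ ^ (i - 1))⁻¹ := eq_mul_inv_of_mul_eq hshift.eq.symm
  rw [hconj]
  exact ((Commute.pow_pow_self δ _ _).mul_right hσ₁).mul_right
    (Commute.pow_pow_self δ _ _).inv_right

end FullTwist

theorem pow_eq_pow_of_semiconjBy {c x y : G} (h : SemiconjBy c x y) {k : ℕ}
    (hc : Commute c (x ^ k)) : x ^ k = y ^ k :=
  mul_right_cancel (hc.eq.symm.trans (h.pow_right k))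

theorem prod_conj_pow_range' (g s : G) (k : ℕ) :
    ((List.range' 1 k).map fun i => g ^ i * s * (g ^ i)⁻¹).prod = (g * s) ^ k * (g ^ k)⁻¹ := by
  induction k with
  | zero => simp
  | succ k ih =>
    rw [List.range'_concat, List.map_append, List.prod_append, ih]
    simp only [List.map_singleton, List.prod_singleton, one_mul, add_comm 1 k, pow_succ]
    group

end Braid

open Braid in
/-- If `σ_1, …, σ_{4h-1}` satisfy the braid relations and
`Γ = σ_1 ⋯ σ_{2h-1} · σ_{4h-1} ⋯ σ_{2h+1}` then
`(σ_1 ⋯ σ_{4h-1})^{4h}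
  = ( (Γσ_{2h}Γ⁻¹)(Γ²σ_{2h}Γ⁻²) ⋯ (Γ^{2h}σ_{2h}Γ^{-2h})
      · (σ_1 ⋯ σ_{2h-1})^{2h} · (σ_{4h-1} ⋯ σ_{2h+1})^{2h} )²`. -/
theorem fullTwist_eq_conjugates_chains_squared
    {G : Type*} [Group G] (h : ℕ) (hh : 1 ≤ h) (σ : ℕ → G)
    (hbraid : ∀ i, 1 ≤ i → i + 2 ≤ 4 * h →
      σ i * σ (i + 1) * σ i = σ (i + 1) * σ i * σ (i + 1))
    (hcomm : ∀ i j, 1 ≤ i → 1 ≤ j → i + 1 ≤ 4 * h → j + 1 ≤ 4 * h → i + 2 ≤ j →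
      σ i * σ j = σ j * σ i)
    (Γ : G) (hΓ : Γ = ascProd σ 1 (2 * h - 1) * descProd σ (4 * h - 1) (2 * h + 1)) :
    (ascProd σ 1 (4 * h - 1)) ^ (4 * h) =
      ( ((List.range' 1 (2 * h)).map (fun i => Γ ^ i * σ (2 * h) * (Γ ^ i)⁻¹)).prod
        * (ascProd σ 1 (2 * h - 1)) ^ (2 * h)
        * (descProd σ (4 * h - 1) (2 * h + 1)) ^ (2 * h) ) ^ 2 := by
  obtain ⟨k, hk⟩ : ∃ k, 2 * h = k + 1 := ⟨2 * h - 1, by omega⟩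
  have hσ : FarCommute σ (4 * h) := fun i j hi hij hj => hcomm i j hi (by omega) (by omega) hj hij
  have hδ : ascProd σ 1 (4 * h - 1) = upChain σ 1 (k + (k + 1)) := by
    rw [ascProd_eq_upChain]; congr 1; omega
  have hA : ascProd σ 1 (2 * h - 1) = upChain σ 1 k := by
    rw [ascProd_eq_upChain]; congr 1; omega
  have hB : descProd σ (4 * h - 1) (2 * h + 1) = downChain σ (k + 2) k := by
    rw [descProd_eq_downChain]; congr 1 <;> omega
  rw [hA, hB] at hΓ
  rw [hδ, hA, hB, show 4 * h = k + (k + 1) + 1 by omega, hk]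
  set A := upChain σ 1 k
  set B := downChain σ (k + 2) k
  set η := A * downChain σ (k + 1) (k + 1)
  have hAB : Commute A B :=
    commute_downChain fun _ _ _ => hσ.upChain_commute le_rfl (by omega) (by omega)
  have hΓσ : Γ * σ (k + 1) = η := by rw [hΓ, mul_assoc, ← downChain_succ]
  have hconj := halfTwist_semiconjBy_upChain_one hσ k k (by omega)
  have hcentral :
      Commute (halfTwist σ (k + 2) k) (upChain σ 1 (k + (k + 1)) ^ (k + (k + 1) + 1)) :=
    (commute_halfTwist fun _ _ _ =>
      upChain_pow_succ_commute hσ hbraid (by omega) (by omega) (by omega)).symm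
  rw [pow_eq_pow_of_semiconjBy hconj hcentral, prod_conj_pow_range', hΓσ, mul_assoc,
    ← hAB.mul_pow, ← hΓ, inv_mul_cancel_right, ← pow_mul]
  congr 1
  omega
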